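/- arXiv:quant-ph/0007016 — 5 statements merged into one kernel-verified Lean document; each statement's English description precedes it below -/
import Mathlib

section
/- Let f, g : {1,...,N} → Z be monotone non-decreasing functions into a linearly ordered set Z, and let r be a positive integer. For 0 ≤ i ≤ ⌈N/r⌉−1, let f_i be the restriction of f to [ir+1, min((i+1)r, N)], and let g'_i be the restriction of g to [j, min(j+r−1, N)] where j is the minimum index with g(j) ≥ f(ir+1) (if it exists). Symmetrically define g_j and f'_j. Then (f,g) contains a claw if and only if some subproblem (f_i, g'_i) or (f'_j, g_j) contains a claw. -/
private lemma blk_aux {r : ℕ} (hr : 0 < r) {x : ℕ} (hx : 1 ≤ x) :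
    (x - 1) / r * r + 1 ≤ x ∧ x ≤ ((x - 1) / r + 1) * r := by
  obtain ⟨x', rfl⟩ : ∃ x', x = x' + 1 := ⟨x - 1, by omega⟩
  simp only [Nat.add_sub_cancel]
  refine ⟨Nat.add_le_add_right (Nat.div_mul_le_self x' r) 1, ?_⟩
  have hdm := Nat.div_add_mod x' r
  have hm := Nat.mod_lt x' hr
  calc x' + 1 = r * (x' / r) + x' % r + 1 := by rw [hdm]
    _ ≤ r * (x' / r) + r := by omega
    _ = (x' / r + 1) * r := by ring

private lemma blk_lt {r : ℕ} (hr : 0 < r) {x N : ℕ} (hx : 1 ≤ x) (hxN : x ≤ N) :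
    (x - 1) / r < (N + r - 1) / r := by
  have h1 : (x - 1) / r ≤ (N - 1) / r := Nat.div_le_div_right (by omega)
  have h2 : N + r - 1 = (N - 1) + r := by omega
  rw [h2, Nat.add_div_right _ hr]
  exact Nat.lt_succ_of_le h1

theorem stmt_4 {Z : Type*} [LinearOrder Z] (N r : ℕ) (hr : 0 < r) (hN : 0 < N)
    (f g : ℕ → Z)
    (hf : ∀ a b, 1 ≤ a → a ≤ b → b ≤ N → f a ≤ f b)
    (hg : ∀ a b, 1 ≤ a → a ≤ b → b ≤ N → g a ≤ g b) :
    (∃ x ∈ Finset.Icc 1 N, ∃ y ∈ Finset.Icc 1 N, f x = g y) ↔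
      ((∃ i < (N + r - 1) / r, ∃ j,
          (j ∈ Finset.Icc 1 N ∧ f (i * r + 1) ≤ g j ∧
            ∀ j' ∈ Finset.Icc 1 N, f (i * r + 1) ≤ g j' → j ≤ j') ∧
          ∃ x ∈ Finset.Icc (i * r + 1) (min ((i + 1) * r) N),
            ∃ y ∈ Finset.Icc j (min (j + r - 1) N), f x = g y) ∨
       (∃ j < (N + r - 1) / r, ∃ i,
          (i ∈ Finset.Icc 1 N ∧ g (j * r + 1) ≤ f i ∧
            ∀ i' ∈ Finset.Icc 1 N, g (j * r + 1) ≤ f i' → i ≤ i') ∧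
          ∃ y ∈ Finset.Icc (j * r + 1) (min ((j + 1) * r) N),
            ∃ x ∈ Finset.Icc i (min (i + r - 1) N), f x = g y)) := by
  classical
  constructor
  · rintro ⟨x₀, hx₀, y₀, hy₀, hxy₀⟩
    have hP : ∃ x, x ∈ Finset.Icc 1 N ∧ ∃ y ∈ Finset.Icc 1 N, f x = g y :=
      ⟨x₀, hx₀, y₀, hy₀, hxy₀⟩
    set x := Nat.find hP with hxdef
    obtain ⟨hxmem, hQ⟩ := Nat.find_spec hP
    set y := Nat.find hQ with hydef
    obtain ⟨hymem, hfxy⟩ := Nat.find_spec hQ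
    rw [Finset.mem_Icc] at hxmem hymem
    obtain ⟨hx1, hxN⟩ := hxmem
    obtain ⟨hy1, hyN⟩ := hymem
    set i := (x - 1) / r with hidef
    obtain ⟨hax, hxb⟩ := blk_aux hr hx1
    rw [← hidef] at hax hxb
    have hiN : i < (N + r - 1) / r := blk_lt hr hx1 hxN
    have haN : i * r + 1 ≤ N := hax.trans hxN
    have hfa : f (i * r + 1) ≤ f x := hf _ _ (Nat.le_add_left 1 _) hax hxN
    have hj0ex : ∃ j', j' ∈ Finset.Icc 1 N ∧ f (i * r + 1) ≤ g j' :=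
      ⟨y, Finset.mem_Icc.mpr ⟨hy1, hyN⟩, hfa.trans (le_of_eq hfxy)⟩
    set j0 := Nat.find hj0ex with hj0def
    obtain ⟨hj0mem, hj0ge⟩ := Nat.find_spec hj0ex
    rw [Finset.mem_Icc] at hj0mem
    have hj0min : ∀ j' ∈ Finset.Icc 1 N, f (i * r + 1) ≤ g j' → j0 ≤ j' :=
      fun j' h1 h2 => Nat.find_min' hj0ex ⟨h1, h2⟩
    have hj0y : j0 ≤ y := hj0min y (Finset.mem_Icc.mpr ⟨hy1, hyN⟩)
      (hfa.trans (le_of_eq hfxy))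
    by_cases hcase : y ≤ j0 + r - 1
    · exact Or.inl ⟨i, hiN, j0, ⟨Finset.mem_Icc.mpr hj0mem, hj0ge, hj0min⟩,
        x, Finset.mem_Icc.mpr ⟨hax, le_min hxb hxN⟩,
        y, Finset.mem_Icc.mpr ⟨hj0y, le_min hcase hyN⟩, hfxy⟩
    · have hyfar : j0 + r ≤ y := by omega
      set j := (y - 1) / r with hjdef
      obtain ⟨hby, hyb⟩ := blk_aux hr hy1
      rw [← hjdef] at hby hyb
      have hjN : j < (N + r - 1) / r := blk_lt hr hy1 hyN
      have hbN : j * r + 1 ≤ N := hby.trans hyN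
      have hgb : g (j * r + 1) ≤ g y := hg _ _ (Nat.le_add_left 1 _) hby hyN
      have hi0ex : ∃ i', i' ∈ Finset.Icc 1 N ∧ g (j * r + 1) ≤ f i' :=
        ⟨x, Finset.mem_Icc.mpr ⟨hx1, hxN⟩, hgb.trans (le_of_eq hfxy.symm)⟩
      set i0 := Nat.find hi0ex with hi0def
      obtain ⟨hi0mem, hi0ge⟩ := Nat.find_spec hi0ex
      rw [Finset.mem_Icc] at hi0mem
      have hi0min : ∀ i' ∈ Finset.Icc 1 N, g (j * r + 1) ≤ f i' → i0 ≤ i' :=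
        fun i' h1 h2 => Nat.find_min' hi0ex ⟨h1, h2⟩
      have hi0x : i0 ≤ x := hi0min x (Finset.mem_Icc.mpr ⟨hx1, hxN⟩)
        (hgb.trans (le_of_eq hfxy.symm))
      by_cases hcase2 : x ≤ i0 + r - 1
      · exact Or.inr ⟨j, hjN, i0, ⟨Finset.mem_Icc.mpr hi0mem, hi0ge, hi0min⟩,
          y, Finset.mem_Icc.mpr ⟨hby, le_min hyb hyN⟩,
          x, Finset.mem_Icc.mpr ⟨hi0x, le_min hcase2 hxN⟩, hfxy⟩
      · exfalso
        have hxfar : i0 + r ≤ x := by omega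
        have h1 : i0 + r ≤ i * r + r := by
          have := hxfar.trans hxb
          rwa [add_mul, one_mul] at this
        have hi0lt : i0 < i * r + 1 := Nat.lt_succ_of_le (Nat.le_of_add_le_add_right h1)
        have h2 : j0 + r ≤ j * r + r := by
          have := hyfar.trans hyb
          rwa [add_mul, one_mul] at this
        have hj0lt : j0 < j * r + 1 := Nat.lt_succ_of_le (Nat.le_of_add_le_add_right h2)
        have e2 : g j0 ≤ g (j * r + 1) := hg _ _ hj0mem.1 (le_of_lt hj0lt) hbN
        have e4 : f i0 ≤ f (i * r + 1) := hf _ _ hi0mem.1 (le_of_lt hi0lt) haN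
        have heq : f (i * r + 1) = g j0 :=
          le_antisymm hj0ge (e2.trans (hi0ge.trans e4))
        have hxle : x ≤ i * r + 1 := Nat.find_min' hP
          ⟨Finset.mem_Icc.mpr ⟨Nat.le_add_left 1 _, haN⟩,
            j0, Finset.mem_Icc.mpr hj0mem, heq⟩
        have hxeq : x = i * r + 1 := le_antisymm hxle hax
        have hyle : y ≤ j0 := Nat.find_min' hQ
          ⟨Finset.mem_Icc.mpr hj0mem, by rw [← hxeq] at heq; exact heq⟩
        exact (lt_of_lt_of_le hj0lt hby).not_ge hyle
  · rintro (⟨i, hi, j, ⟨hjmem, -, -⟩, x, hx, y, hy, hxy⟩ |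
            ⟨j, hj, i, ⟨himem, -, -⟩, y, hy, x, hx, hxy⟩) <;>
      rw [Finset.mem_Icc] at *
    · exact ⟨x, Finset.mem_Icc.mpr ⟨le_trans (Nat.le_add_left 1 _) hx.1,
        hx.2.trans (min_le_right _ _)⟩,
        y, Finset.mem_Icc.mpr ⟨hjmem.1.trans hy.1, hy.2.trans (min_le_right _ _)⟩, hxy⟩
    · exact ⟨x, Finset.mem_Icc.mpr ⟨himem.1.trans hx.1, hx.2.trans (min_le_right _ _)⟩,
        y, Finset.mem_Icc.mpr ⟨le_trans (Nat.le_add_left 1 _) hy.1,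
        hy.2.trans (min_le_right _ _)⟩, hxy⟩
end

section
/- Let T : ℕ → ℝ≥0 satisfy T(N) ≤ c·sqrt(N/r(N))·T(r(N)) for all N > N₀, where r(N) = ⌈(log₂ N)²⌉, and T(N) ≤ c for N ≤ N₀. Then there exists a constant d > 1 such that T(N) ≤ sqrt(N)·d^{log*(N)} for all N ≥ 2, where log*(N) = min{i ≥ 0 : log₂^{(i)}(N) ≤ 1} is the iterated logarithm. -/
/-!
Write `r N = ⌈(log₂ N)²⌉`. Since `r (r N) ≈ (2 log₂ log₂ N)²` is eventually below `log₂ N`, two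
steps of the recursion lower `log*` by at least one, so the potential `log* N + log* (r N)`, which
is at most `2 log* N`, drops by one at every step. Each step costs a factor `c` and the factors
`√(N / r N)` telescope to `√N`, while the values of `T` below the threshold where this kicks in
are bounded by their maximum.
-/

/-- The `i`-fold iterated base-2 logarithm. -/
noncomputable def iterLog : ℕ → ℝ → ℝ
  | 0, x => x
  | (i + 1), x => Real.logb 2 (iterLog i x)

/-- The iterated logarithm `log*`. -/
noncomputable def logStar (N : ℕ) : ℕ := sInf {i : ℕ | iterLog i (N : ℝ) ≤ 1}

open Real Filter Finset

lemma iterLog_succ_eq (i : ℕ) (x : ℝ) : iterLog (i + 1) x = iterLog i (logb 2 x) := by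
  induction i generalizing x with
  | zero => rfl
  | succ i ih => exact congrArg (logb 2) (ih x)

lemma exists_iterLog_le_one (x : ℝ) : ∃ i, iterLog i x ≤ 1 := by
  obtain ⟨n, hn⟩ := pow_unbounded_of_one_lt x one_lt_two
  induction n generalizing x with
  | zero => exact ⟨0, (by simpa using hn : x < 1).le⟩
  | succ n ih =>
    rcases le_or_gt x 1 with hx | hx
    · exact ⟨0, hx⟩
    · have hlog : logb 2 x < 2 ^ n := by
        have hn' : x < (2 : ℝ) ^ ((n + 1 : ℕ) : ℝ) := by rwa [rpow_natCast]
        have : ((n + 1 : ℕ) : ℝ) ≤ 2 ^ n := by exact_mod_cast Nat.lt_two_pow_self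
        exact ((logb_lt_iff_lt_rpow one_lt_two (by linarith)).2 hn').trans_le this
      obtain ⟨i, hi⟩ := ih _ hlog
      exact ⟨i + 1, by rwa [iterLog_succ_eq]⟩

noncomputable def realLogStar (x : ℝ) : ℕ := sInf {i : ℕ | iterLog i x ≤ 1}

lemma logStar_eq_realLogStar (N : ℕ) : logStar N = realLogStar N := rfl

lemma iterLog_realLogStar_le_one (x : ℝ) : iterLog (realLogStar x) x ≤ 1 :=
  Nat.sInf_mem (exists_iterLog_le_one x)

lemma realLogStar_le {x : ℝ} {i : ℕ} (h : iterLog i x ≤ 1) : realLogStar x ≤ i := Nat.sInf_le h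

lemma realLogStar_of_le_one {x : ℝ} (hx : x ≤ 1) : realLogStar x = 0 :=
  Nat.sInf_eq_zero.2 (Or.inl hx)

lemma realLogStar_of_one_lt {x : ℝ} (hx : 1 < x) : realLogStar x = realLogStar (logb 2 x) + 1 := by
  refine le_antisymm (realLogStar_le ?_) ?_
  · rw [iterLog_succ_eq]
    exact iterLog_realLogStar_le_one _
  · refine le_csInf (exists_iterLog_le_one x) fun i hi => ?_
    cases i with
    | zero => exact absurd hi hx.not_ge
    | succ i => exact Nat.succ_le_succ (realLogStar_le (iterLog_succ_eq i x ▸ hi))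

lemma realLogStar_mono : Monotone realLogStar := by
  suffices ∀ i x y, x ≤ y → iterLog i y ≤ 1 → realLogStar x ≤ i from
    fun x y hxy => this _ x y hxy (iterLog_realLogStar_le_one y)
  intro i
  induction i with
  | zero => exact fun x y hxy hy => (realLogStar_of_le_one (hxy.trans hy)).le
  | succ i ih =>
    intro x y hxy hy
    rcases le_or_gt x 1 with hx | hx
    · simp [realLogStar_of_le_one hx]
    · rw [realLogStar_of_one_lt hx]
      rw [iterLog_succ_eq] at hy
      exact Nat.succ_le_succ
        (ih _ _ (logb_le_logb_of_le one_lt_two (by linarith) hxy) hy)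

lemma realLogStar_lt {x y : ℝ} (hx : 1 < x) (hy : y ≤ logb 2 x) :
    realLogStar y < realLogStar x :=
  realLogStar_of_one_lt hx ▸ Nat.lt_succ_of_le (realLogStar_mono hy)

lemma one_le_logStar {N : ℕ} (hN : 2 ≤ N) : 1 ≤ logStar N := by
  rw [logStar_eq_realLogStar, realLogStar_of_one_lt (by exact_mod_cast hN)]
  omega

lemma logStar_mono : Monotone logStar := fun _ _ h => realLogStar_mono (Nat.cast_le.2 h)

noncomputable def logSqCeil (N : ℕ) : ℕ := ⌈(logb 2 N) ^ 2⌉₊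

lemma one_le_logSqCeil {N : ℕ} (hN : 2 ≤ N) : 1 ≤ logSqCeil N := by
  have : 0 < logb 2 (N : ℝ) := logb_pos one_lt_two (by exact_mod_cast hN)
  exact Nat.one_le_ceil_iff.2 (by positivity)

lemma eventually_ceil_sq_logb_ceil_sq_le :
    ∀ᶠ x : ℝ in atTop, (⌈(logb 2 ⌈x ^ 2⌉₊) ^ 2⌉₊ : ℝ) ≤ x := by
  have hlog : ∀ᶠ x : ℝ in atTop, 10 * logb 2 x ^ 2 ≤ x := by
    filter_upwards [((isLittleO_pow_log_id_atTop (n := 2)).const_mul_left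
      (10 / log 2 ^ 2)).eventuallyLE, eventually_ge_atTop 0] with x hx hx0
    rw [norm_eq_abs, norm_eq_abs, id, abs_of_nonneg hx0] at hx
    calc 10 * logb 2 x ^ 2 = 10 / log 2 ^ 2 * log x ^ 2 := by rw [logb, div_pow]; ring
      _ ≤ x := (le_abs_self _).trans hx
  filter_upwards [hlog, eventually_ge_atTop 2] with x hx hx2
  have hlogx : 1 ≤ logb 2 x := by
    simpa [logb_self_eq_one one_lt_two] using logb_le_logb_of_le (b := 2) one_lt_two two_pos hx2
  have hceil : (⌈x ^ 2⌉₊ : ℝ) ≤ 2 * x ^ 2 := by nlinarith [Nat.ceil_lt_add_one (sq_nonneg x)]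
  have hceil_one : 1 ≤ (⌈x ^ 2⌉₊ : ℝ) := by exact_mod_cast Nat.one_le_ceil_iff.2 (by positivity)
  have hlog_ceil : logb 2 ⌈x ^ 2⌉₊ ≤ 3 * logb 2 x :=
    calc logb 2 ⌈x ^ 2⌉₊ ≤ logb 2 (2 * x ^ 2) := logb_le_logb_of_le one_lt_two (by linarith) hceil
      _ = 1 + 2 * logb 2 x := by
        rw [logb_mul two_ne_zero (by positivity), logb_self_eq_one one_lt_two, logb_pow]
        push_cast; ring
      _ ≤ 3 * logb 2 x := by linarith
  have h0 : 0 ≤ logb 2 ⌈x ^ 2⌉₊ := logb_nonneg one_lt_two hceil_one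
  calc (⌈(logb 2 ⌈x ^ 2⌉₊) ^ 2⌉₊ : ℝ) ≤ (logb 2 ⌈x ^ 2⌉₊) ^ 2 + 1 :=
        (Nat.ceil_lt_add_one (sq_nonneg _)).le
    _ ≤ 10 * logb 2 x ^ 2 := by nlinarith
    _ ≤ x := hx

lemma eventually_logSqCeil_logSqCeil_le :
    ∀ᶠ N : ℕ in atTop, (logSqCeil (logSqCeil N) : ℝ) ≤ logb 2 N :=
  ((tendsto_logb_atTop one_lt_two).comp tendsto_natCast_atTop_atTop).eventually
    eventually_ceil_sq_logb_ceil_sq_le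

lemma eventually_logStar_logSqCeil_logSqCeil_lt :
    ∀ᶠ N : ℕ in atTop, logStar (logSqCeil (logSqCeil N)) < logStar N := by
  filter_upwards [eventually_ge_atTop 2, eventually_logSqCeil_logSqCeil_le] with N hN h
  exact realLogStar_lt (by exact_mod_cast hN) h

lemma le_mul_sqrt_mul_pow_of_le_mul_sqrt {T : ℕ → ℝ} {r P : ℕ → ℕ} {M : ℕ} {A C : ℝ}
    (hA : 0 ≤ A) (hC : 1 ≤ C) (hsmall : ∀ N ≤ M, T N ≤ A)
    (hr_pos : ∀ N, M < N → 0 < r N) (hr_lt : ∀ N, M < N → r N < N)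
    (hrec : ∀ N, M < N → T N ≤ C * √((N : ℝ) / r N) * T (r N))
    (hP : ∀ N, M < N → P (r N) < P N) :
    ∀ N, 0 < N → T N ≤ A * √N * C ^ P N := by
  intro N
  induction N using Nat.strong_induction_on with
  | _ N ih =>
  intro hN
  rcases le_or_gt N M with hNM | hNM
  · have hsqrt : 1 ≤ √(N : ℝ) := one_le_sqrt.2 (by exact_mod_cast hN)
    calc T N ≤ A := hsmall N hNM
      _ ≤ A * (√N * C ^ P N) :=
        le_mul_of_one_le_right hA (one_le_mul_of_one_le_of_one_le hsqrt (one_le_pow₀ hC))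
      _ = A * √N * C ^ P N := by ring
  have hr : (0 : ℝ) < r N := by exact_mod_cast hr_pos N hNM
  have htelescope : √((N : ℝ) / r N) * √(r N : ℝ) = √N := by
    rw [← sqrt_mul (by positivity), div_mul_cancel₀ _ hr.ne']
  calc T N ≤ C * √((N : ℝ) / r N) * T (r N) := hrec N hNM
    _ ≤ C * √((N : ℝ) / r N) * (A * √(r N : ℝ) * C ^ P (r N)) := by
        gcongr
        exact ih _ (hr_lt N hNM) (hr_pos N hNM)
    _ = A * (√((N : ℝ) / r N) * √(r N : ℝ)) * C ^ (P (r N) + 1) := by ring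
    _ ≤ A * √N * C ^ P N := by
        rw [htelescope]
        gcongr
        exact hP N hNM

lemma le_mul_max_mul_sq_pow {t s A C : ℝ} {e k : ℕ} (hs : 0 ≤ s) (hC : 1 ≤ C) (hk : 1 ≤ k)
    (he : e ≤ 2 * k) (ht : t ≤ A * s * C ^ e) : t ≤ s * (max A 1 * C ^ 2) ^ k := by
  refine ht.trans ?_
  rw [mul_pow, ← pow_mul, mul_right_comm, mul_comm s]
  gcongr
  exact (le_max_left A 1).trans (le_self_pow₀ (le_max_right A 1) (by omega))

theorem stmt_5_general (c : ℝ) (N₀ : ℕ) (T : ℕ → NNReal)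
    (hrlt : ∀ N : ℕ, N₀ < N → ⌈(Real.logb 2 N) ^ 2⌉₊ < N)
    (hrec : ∀ N : ℕ, N₀ < N →
      (T N : ℝ) ≤ c * Real.sqrt ((N : ℝ) / (⌈(Real.logb 2 N) ^ 2⌉₊ : ℝ)) *
        (T ⌈(Real.logb 2 N) ^ 2⌉₊ : ℝ)) :
    ∃ d : ℝ, 1 < d ∧ ∀ N : ℕ, 2 ≤ N →
      (T N : ℝ) ≤ Real.sqrt (N : ℝ) * d ^ logStar N := by
  obtain ⟨K, hK⟩ := eventually_atTop.1
    ((eventually_ge_atTop 2).and eventually_logStar_logSqCeil_logSqCeil_lt)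
  set M := max N₀ K
  set A : ℝ := ↑((range (M + 1)).sup T)
  have hA : 0 ≤ A := NNReal.coe_nonneg _
  have hsmall : ∀ N ≤ M, (T N : ℝ) ≤ A := fun N hN =>
    NNReal.coe_le_coe.2 (le_sup (mem_range.2 (Nat.lt_succ_of_le hN)))
  have hC : 1 ≤ max c 2 := le_max_of_le_right one_le_two
  have hbound := le_mul_sqrt_mul_pow_of_le_mul_sqrt (T := fun N => (T N : ℝ)) (r := logSqCeil)
    (P := fun N => logStar N + logStar (logSqCeil N)) hA hC hsmall
    (fun N hN => one_le_logSqCeil (hK N (by omega)).1) (fun N hN => hrlt N (by omega))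
    (fun N hN => (hrec N (by omega)).trans <| mul_le_mul_of_nonneg_right
      (mul_le_mul_of_nonneg_right (le_max_left c 2) (sqrt_nonneg _)) (NNReal.coe_nonneg _))
    (fun N hN => by have := (hK N (by omega)).2; omega)
  refine ⟨max A 1 * max c 2 ^ 2, by nlinarith [le_max_right A 1, le_max_right c 2],
    fun N hN => ?_⟩
  obtain ⟨e, he, hTe⟩ : ∃ e ≤ 2 * logStar N, (T N : ℝ) ≤ A * √N * max c 2 ^ e := by
    rcases le_or_gt N M with hNM | hNM
    · refine ⟨0, Nat.zero_le _, ?_⟩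
      simpa using (hsmall N hNM).trans
        (le_mul_of_one_le_right hA (one_le_sqrt.2 (Nat.one_le_cast.2 (by omega))))
    · have : logStar (logSqCeil N) ≤ logStar N := logStar_mono (hrlt N (by omega)).le
      exact ⟨_, by omega, hbound N (by omega)⟩
  exact le_mul_max_mul_sq_pow (sqrt_nonneg _) hC (one_le_logStar hN) he hTe

theorem stmt_5 (c : ℝ) (N₀ : ℕ) (T : ℕ → NNReal)
    (hc : 0 < c) (hN₀ : 2 ≤ N₀)
    (hrlt : ∀ N : ℕ, N₀ < N → ⌈(Real.logb 2 N) ^ 2⌉₊ < N)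
    (hrec : ∀ N : ℕ, N₀ < N →
      (T N : ℝ) ≤ c * Real.sqrt ((N : ℝ) / (⌈(Real.logb 2 N) ^ 2⌉₊ : ℝ)) *
        (T ⌈(Real.logb 2 N) ^ 2⌉₊ : ℝ))
    (hbase : ∀ N : ℕ, N ≤ N₀ → (T N : ℝ) ≤ c) :
    ∃ d : ℝ, 1 < d ∧ ∀ N : ℕ, 2 ≤ N →
      (T N : ℝ) ≤ Real.sqrt (N : ℝ) * d ^ logStar N :=
  stmt_5_general c N₀ T hrlt hrec
end

section
/- For every constant integer i ≥ 1 and every constant c > 1, c^{log*(N)} = o(log^{(i)}(N)) as N → ∞; that is, for all ε > 0 there exists N₀ such that for all N ≥ N₀, c^{log*(N)} ≤ ε · log₂^{(i)}(N). -/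
open Filter

def tower : ℕ → ℕ
  | 0 => 1
  | n + 1 => 2 ^ tower n

theorem tower_strictMono : StrictMono tower :=
  strictMono_nat_of_lt_succ fun _ => Nat.lt_two_pow_self

theorem self_le_tower (n : ℕ) : n ≤ tower n :=
  tower_strictMono.id_le n

theorem cast_tower_succ (n : ℕ) : (tower (n + 1) : ℝ) = (2 : ℝ) ^ (tower n : ℝ) := by
  rw [Real.rpow_natCast]
  push_cast [tower]
  rfl

theorem mul_le_tower (K n : ℕ) : K * n ≤ tower (n + K + 1) :=
  calc K * n ≤ 2 ^ K * 2 ^ n := Nat.mul_le_mul Nat.lt_two_pow_self.le Nat.lt_two_pow_self.le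
    _ = 2 ^ (n + K) := by rw [pow_add, mul_comm]
    _ ≤ tower (n + K + 1) := Nat.pow_le_pow_right two_pos (self_le_tower _)

theorem eventually_add_mul_le_tower (a b : ℕ) : ∀ᶠ n in atTop, a + b * n ≤ tower n := by
  filter_upwards [eventually_ge_atTop (a + b * (b + 2) + (b + 2))] with n hn
  obtain ⟨m, rfl⟩ : ∃ m, n = m + (b + 1) + 1 := ⟨n - (b + 2), by omega⟩
  have hm : a + b * (b + 2) ≤ m := by omega
  calc a + b * (m + (b + 1) + 1) = (a + b * (b + 2)) + b * m := by ring
    _ ≤ m + b * m := by gcongr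
    _ = (b + 1) * m := by ring
    _ ≤ tower (m + (b + 1) + 1) := mul_le_tower _ _

theorem eventually_pow_le_mul_tower_sub (c : ℝ) {ε : ℝ} (hε : 0 < ε) (s : ℕ) :
    ∀ᶠ k in atTop, c ^ k ≤ ε * tower (k - s) := by
  obtain ⟨b, hb⟩ := pow_unbounded_of_one_lt |c| one_lt_two
  obtain ⟨a, ha⟩ := pow_unbounded_of_one_lt ε⁻¹ one_lt_two
  have hεa : 1 ≤ ε * 2 ^ a := by
    rw [inv_lt_iff_one_lt_mul₀' hε] at ha
    exact ha.le
  have hlin : ∀ᶠ k in atTop, a + b * k ≤ tower (k - (s + 1)) := by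
    filter_upwards [(tendsto_sub_atTop_nat (s + 1)).eventually
      (eventually_add_mul_le_tower (a + b * (s + 1)) b), eventually_gt_atTop s] with k hk hks
    rwa [add_assoc, ← mul_add, Nat.add_sub_cancel' hks] at hk
  filter_upwards [hlin, eventually_gt_atTop s] with k hk hks
  have htower : (tower (k - s) : ℝ) = 2 ^ tower (k - (s + 1)) := by
    rw [show k - s = k - (s + 1) + 1 by omega]
    push_cast [tower]
    rfl
  calc c ^ k ≤ |c| ^ k := (le_abs_self _).trans (abs_pow c k).le
    _ ≤ (2 ^ b) ^ k := pow_le_pow_left₀ (abs_nonneg c) hb.le k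
    _ ≤ ε * 2 ^ a * (2 ^ b) ^ k := le_mul_of_one_le_left (by positivity) hεa
    _ = ε * 2 ^ (a + b * k) := by rw [pow_add, pow_mul]; ring
    _ ≤ ε * tower (k - s) := by
      rw [htower]
      gcongr
      exact one_le_two

theorem iterLog_eq_iterate (j : ℕ) : iterLog j = (Real.logb 2)^[j] := by
  funext x
  induction j with
  | zero => rfl
  | succ j ih => rw [Function.iterate_succ_apply', ← ih]; rfl

theorem iterLog_succ' (j : ℕ) (x : ℝ) : iterLog (j + 1) x = iterLog j (Real.logb 2 x) := by
  simp only [iterLog_eq_iterate, Function.iterate_succ_apply]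

theorem exists_iterLog_le_one_s7 {x : ℝ} {n : ℕ} (hx : x ≤ tower n) :
    ∃ j, iterLog j x ≤ 1 := by
  induction n generalizing x with
  | zero => exact ⟨0, by simpa [tower, iterLog] using hx⟩
  | succ n ih =>
    by_cases hx1 : x ≤ 1
    · exact ⟨0, hx1⟩
    have hlog : Real.logb 2 x ≤ tower n := by
      rw [Real.logb_le_iff_le_rpow one_lt_two (by linarith), ← cast_tower_succ]
      exact hx
    obtain ⟨j, hj⟩ := ih hlog
    exact ⟨j + 1, by rwa [iterLog_succ']⟩

theorem one_lt_iterLog_of_tower_lt {x : ℝ} {d : ℕ} (hx : tower d < x) : 1 < iterLog d x := by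
  induction d generalizing x with
  | zero => simpa [tower, iterLog] using hx
  | succ d ih =>
    have hx0 : 0 < x := lt_of_le_of_lt (Nat.cast_nonneg _) hx
    rw [iterLog_succ']
    apply ih
    rwa [Real.lt_logb_iff_rpow_lt one_lt_two hx0, ← cast_tower_succ]

/-- All intermediate iterates are assumed `> 1`: `Real.logb` only sees `|y|`, so
`1 < iterLog (m + d) x` alone says nothing about `iterLog m x`. -/
theorem tower_lt_iterLog {x : ℝ} {m d : ℕ} (h : ∀ j ≤ m + d, 1 < iterLog j x) :
    tower d < iterLog m x := by
  induction d generalizing m with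
  | zero => simpa [tower] using h m le_self_add
  | succ d ih =>
    have hlog : (tower d : ℝ) < Real.logb 2 (iterLog m x) :=
      ih (m := m + 1) fun j hj => h j (by omega)
    have hpos : 0 < iterLog m x := one_pos.trans (h m (by omega))
    rwa [Real.lt_logb_iff_rpow_lt one_lt_two hpos, ← cast_tower_succ] at hlog

theorem iterLog_logStar_le_one (N : ℕ) : iterLog (logStar N) N ≤ 1 :=
  Nat.sInf_mem (exists_iterLog_le_one_s7 (x := N) (n := N) (by exact_mod_cast self_le_tower N))

theorem one_lt_iterLog_of_lt_logStar {N j : ℕ} (h : j < logStar N) : 1 < iterLog j N :=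
  not_le.1 (Nat.notMem_of_lt_sInf h)

theorem lt_logStar_of_tower_lt {N K : ℕ} (h : tower K < N) : K < logStar N := by
  by_contra! hle
  have hlt : (tower (logStar N) : ℝ) < N := by
    exact_mod_cast (tower_strictMono.monotone hle).trans_lt h
  exact (one_lt_iterLog_of_tower_lt hlt).not_ge (iterLog_logStar_le_one N)

theorem tendsto_logStar_atTop : Tendsto logStar atTop atTop :=
  tendsto_atTop.2 fun K => eventually_atTop.2
    ⟨tower K + 1, fun _ hN => (lt_logStar_of_tower_lt hN).le⟩

theorem tower_lt_iterLog_of_lt_logStar {N i : ℕ} (h : i < logStar N) :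
    tower (logStar N - (1 + i)) < iterLog i N :=
  tower_lt_iterLog fun _ hj => one_lt_iterLog_of_lt_logStar (by omega)

theorem stmt_7_general (i : ℕ) (c : ℝ) :
    ∀ ε : ℝ, 0 < ε → ∃ N₀ : ℕ, ∀ N : ℕ, N₀ ≤ N →
      c ^ logStar N ≤ ε * iterLog i (N : ℝ) := by
  intro ε hε
  have hk : ∀ᶠ k in atTop, i < k ∧ c ^ k ≤ ε * tower (k - (1 + i)) :=
    (eventually_gt_atTop i).and (eventually_pow_le_mul_tower_sub c hε (1 + i))
  obtain ⟨N₀, hN₀⟩ := eventually_atTop.1 (tendsto_logStar_atTop.eventually hk)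
  refine ⟨N₀, fun N hN => ?_⟩
  obtain ⟨hiN, hpow⟩ := hN₀ N hN
  calc c ^ logStar N ≤ ε * tower (logStar N - (1 + i)) := hpow
    _ ≤ ε * iterLog i N := by gcongr; exact (tower_lt_iterLog_of_lt_logStar hiN).le

theorem stmt_7 (i : ℕ) (hi : 1 ≤ i) (c : ℝ) (hc : 1 < c) :
    ∀ ε : ℝ, 0 < ε → ∃ N₀ : ℕ, ∀ N : ℕ, N₀ ≤ N →
      c ^ logStar N ≤ ε * iterLog i (N : ℝ) :=
  stmt_7_general i c
end

section
/- Let N be divisible by 4. Let A be the set of functions f : [N] → [N] with exactly N/4 collision pairs and every fiber of size at most 2, and let B be the set of functions g : [N] → [N] with exactly N/4 + 1 collision pairs and every fiber of size at most 2. Define R ⊆ A×B by (f,g) ∈ R iff f and g differ at exactly one point. Then: for every f ∈ A there are Θ(N²) functions g ∈ B with (f,g) ∈ R (i.e., at least aN² and at most bN² for some absolute constants 0 < a ≤ b). -/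
open Finset

lemma aux_upper {N : ℕ} (hN : 0 < N) (f : Fin N → Fin N) :
    (Finset.univ.filter (fun g : Fin N → Fin N =>
      (Finset.univ.filter (fun x => f x ≠ g x)).card = 1)).card ≤ N ^ 2 := by
  have h : (Finset.univ.filter (fun g : Fin N → Fin N =>
      (Finset.univ.filter (fun x => f x ≠ g x)).card = 1)).card ≤
      (Finset.univ : Finset (Fin N × Fin N)).card := by
    apply Finset.card_le_card_of_injOn
      (fun g => if h : (Finset.univ.filter (fun x => f x ≠ g x)).Nonempty then
        ((Finset.univ.filter (fun x => f x ≠ g x)).min' h,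
          g ((Finset.univ.filter (fun x => f x ≠ g x)).min' h))
        else (⟨0, hN⟩, ⟨0, hN⟩))
    · intro g _; exact Finset.mem_univ _
    · intro g1 hg1 g2 hg2 heq
      simp only [Finset.mem_coe, Finset.mem_filter] at hg1 hg2
      obtain ⟨x1, hx1⟩ := Finset.card_eq_one.mp hg1.2
      obtain ⟨x2, hx2⟩ := Finset.card_eq_one.mp hg2.2
      have ne1 : (Finset.univ.filter (fun x => f x ≠ g1 x)).Nonempty := by
        rw [hx1]; exact Finset.singleton_nonempty _
      have ne2 : (Finset.univ.filter (fun x => f x ≠ g2 x)).Nonempty := by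
        rw [hx2]; exact Finset.singleton_nonempty _
      simp only [dif_pos ne1, dif_pos ne2] at heq
      have hm1 : (Finset.univ.filter (fun x => f x ≠ g1 x)).min' ne1 = x1 := by
        simp [hx1]
      have hm2 : (Finset.univ.filter (fun x => f x ≠ g2 x)).min' ne2 = x2 := by
        simp [hx2]
      rw [hm1, hm2] at heq
      obtain ⟨he1, he2⟩ := Prod.mk.injEq .. ▸ heq
      have hx12 : x1 = x2 := he1
      funext y
      by_cases hy : y = x1
      · subst hy; rw [he2]; rw [hx12]
      · have h1 : f y = g1 y := by
          by_contra hc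
          have : y ∈ Finset.univ.filter (fun x => f x ≠ g1 x) := by
            simp [hc]
          rw [hx1] at this; simp at this; exact hy this
        have h2 : f y = g2 y := by
          by_contra hc
          have : y ∈ Finset.univ.filter (fun x => f x ≠ g2 x) := by
            simp [hc]
          rw [hx2] at this; simp at this; exact hy (this.trans hx12.symm)
        rw [← h1, h2]
  simpa [sq] using h

open Finset

lemma aux_lower {N : ℕ} (hN : 0 < N) (hdvd : 4 ∣ N) (f : Fin N → Fin N)
    (hC : (Finset.univ.filter
      (fun p : Fin N × Fin N => p.1 < p.2 ∧ f p.1 = f p.2)).card = N / 4)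
    (hF : ∀ z : Fin N, (Finset.univ.filter (fun x => f x = z)).card ≤ 2) :
    N ^ 2 ≤ 8 * (Finset.univ.filter (fun g : Fin N → Fin N =>
      (Finset.univ.filter
        (fun p : Fin N × Fin N => p.1 < p.2 ∧ g p.1 = g p.2)).card = N / 4 + 1 ∧
      (∀ z : Fin N, (Finset.univ.filter (fun x => g x = z)).card ≤ 2) ∧
      (Finset.univ.filter (fun x => f x ≠ g x)).card = 1)).card := by
  obtain ⟨k, hk⟩ := hdvd
  have hk1 : 1 ≤ k := by omega
  set C := Finset.univ.filter
      (fun p : Fin N × Fin N => p.1 < p.2 ∧ f p.1 = f p.2) with hCdef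
  set D := Finset.univ.filter
      (fun x : Fin N => (Finset.univ.filter (fun y => f y = f x)).card = 2) with hDdef
  -- each point is in its own fiber
  have hself : ∀ x : Fin N, x ∈ Finset.univ.filter (fun y => f y = f x) := by
    intro x; simp
  -- elements of collision pairs are distinct and fibers behave
  have hfibtwo : ∀ p : Fin N × Fin N, p ∈ C →
      Finset.univ.filter (fun y => f y = f p.1) = {p.1, p.2} := by
    intro p hp
    simp only [hCdef, Finset.mem_filter, Finset.mem_univ, true_and] at hp
    have hne : p.1 ≠ p.2 := ne_of_lt hp.1
    have hsub : ({p.1, p.2} : Finset (Fin N)) ⊆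
        Finset.univ.filter (fun y => f y = f p.1) := by
      intro y hy
      simp only [Finset.mem_insert, Finset.mem_singleton] at hy
      rcases hy with h | h <;> subst h <;> simp [hp.2]
    have hcard2 : ({p.1, p.2} : Finset (Fin N)).card = 2 := by
      rw [Finset.card_insert_of_notMem (by simpa using hne), Finset.card_singleton]
    exact (Finset.eq_of_subset_of_card_le hsub (by rw [hcard2]; exact hF _)).symm
  -- D is the biUnion of C
  have hDC : D = C.biUnion (fun p => {p.1, p.2}) := by
    ext x
    simp only [hDdef, Finset.mem_filter, Finset.mem_univ, true_and, Finset.mem_biUnion]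
    constructor
    · intro h2
      obtain ⟨y, hy, hyx⟩ := Finset.exists_mem_ne
        (lt_of_lt_of_eq one_lt_two h2.symm) x
      simp only [Finset.mem_filter, Finset.mem_univ, true_and] at hy
      rcases lt_or_gt_of_ne hyx with h | h
      · exact ⟨(y, x), by simp [hCdef, h, hy], by simp⟩
      · exact ⟨(x, y), by simp [hCdef, h, hy.symm], by simp⟩
    · rintro ⟨p, hp, hx⟩
      have hfib := hfibtwo p hp
      simp only [hCdef, Finset.mem_filter, Finset.mem_univ, true_and] at hp
      have hne : p.1 ≠ p.2 := ne_of_lt hp.1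
      simp only [Finset.mem_insert, Finset.mem_singleton] at hx
      have hfx : f x = f p.1 := by rcases hx with h | h <;> subst h <;> simp [hp.2]
      have : Finset.univ.filter (fun y => f y = f x) = {p.1, p.2} := by
        rw [← hfib]; simp only [hfx]
      rw [this, Finset.card_insert_of_notMem (by simpa using hne),
        Finset.card_singleton]
  -- pairwise disjointness
  have hdisj : ∀ p ∈ C, ∀ q ∈ C, p ≠ q →
      Disjoint ({p.1, p.2} : Finset (Fin N)) {q.1, q.2} := by
    intro p hp q hq hpq
    have hfp := hfibtwo p hp
    have hfq := hfibtwo q hq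
    simp only [hCdef, Finset.mem_filter, Finset.mem_univ, true_and] at hp hq
    rw [Finset.disjoint_left]
    intro x hxp hxq
    simp only [Finset.mem_insert, Finset.mem_singleton] at hxp hxq
    have hfx1 : f x = f p.1 := by rcases hxp with h | h <;> subst h <;> simp [hp.2]
    have hfx2 : f x = f q.1 := by rcases hxq with h | h <;> subst h <;> simp [hq.2]
    have hset : ({p.1, p.2} : Finset (Fin N)) = {q.1, q.2} := by
      rw [← hfp, ← hfq, ← hfx1, ← hfx2]
    apply hpq
    have h1 : p.1 ∈ ({q.1, q.2} : Finset (Fin N)) := hset ▸ (by simp)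
    have h2 : p.2 ∈ ({q.1, q.2} : Finset (Fin N)) := hset ▸ (by simp)
    simp only [Finset.mem_insert, Finset.mem_singleton] at h1 h2
    have hlt1 := hp.1; have hlt2 := hq.1
    obtain ⟨p1, p2⟩ := p; obtain ⟨q1, q2⟩ := q
    simp only at h1 h2 hlt1 hlt2 ⊢
    rcases h1 with h1 | h1 <;> rcases h2 with h2 | h2
    · exfalso; rw [h1, h2] at hlt1; exact lt_irrefl _ hlt1
    · simp [h1, h2]
    · exfalso; rw [h1] at hlt1; rw [h2] at hlt1
      exact lt_irrefl _ (hlt2.trans hlt1)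
    · exfalso; rw [h1, h2] at hlt1; exact lt_irrefl _ hlt1
  have hDcard : D.card = 2 * k := by
    rw [hDC, Finset.card_biUnion hdisj]
    have : ∀ p ∈ C, ({p.1, p.2} : Finset (Fin N)).card = 2 := by
      intro p hp
      simp only [hCdef, Finset.mem_filter, Finset.mem_univ, true_and] at hp
      rw [Finset.card_insert_of_notMem (by simpa using ne_of_lt hp.1),
        Finset.card_singleton]
    rw [Finset.sum_congr rfl this, Finset.sum_const, smul_eq_mul, hC]
    omega
  set S1 := Finset.univ \ D with hS1def
  have hS1card : S1.card = 2 * k := by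
    rw [hS1def, Finset.card_sdiff_of_subset (Finset.subset_univ _), Finset.card_univ,
      Fintype.card_fin, hDcard]
    omega
  have hS1fib : ∀ x ∈ S1, ∀ y, f y = f x → y = x := by
    intro x hx y hy
    have hxD : x ∉ D := (Finset.mem_sdiff.mp hx).2
    have hne2 : (Finset.univ.filter (fun y => f y = f x)).card ≠ 2 := by
      intro h; exact hxD (by simp [hDdef, h])
    have hpos : 0 < (Finset.univ.filter (fun y => f y = f x)).card :=
      Finset.card_pos.mpr ⟨x, hself x⟩
    have hle2 := hF (f x)
    have hcard1 : (Finset.univ.filter (fun y => f y = f x)).card = 1 := by omega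
    obtain ⟨a, ha⟩ := Finset.card_eq_one.mp hcard1
    have hxa : x = a := by have := hself x; rw [ha] at this; simpa using this
    have hya : y = a := by
      have : y ∈ Finset.univ.filter (fun w => f w = f x) := by simp [hy]
      rw [ha] at this; simpa using this
    rw [hya, hxa]
  set P := (S1 ×ˢ S1).filter (fun p : Fin N × Fin N => ¬ p.1 = p.2) with hPdef
  -- cardinality of P
  have hdiagcard : ((S1 ×ˢ S1).filter
      (fun p : Fin N × Fin N => p.1 = p.2)).card = 2 * k := by
    have himg : (S1 ×ˢ S1).filter (fun p : Fin N × Fin N => p.1 = p.2) =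
        S1.image (fun x => (x, x)) := by
      ext p
      simp only [Finset.mem_filter, Finset.mem_product, Finset.mem_image]
      constructor
      · rintro ⟨⟨h1, _⟩, h3⟩
        exact ⟨p.1, h1, by rw [Prod.ext_iff]; exact ⟨rfl, h3⟩⟩
      · rintro ⟨x, hx, rfl⟩; exact ⟨⟨hx, hx⟩, rfl⟩
    rw [himg, Finset.card_image_of_injective _ (fun a b h => (Prod.ext_iff.mp h).1),
      hS1card]
  have hPcard : P.card + 2 * k = 2 * k * (2 * k) := by
    have hsplit := Finset.card_filter_add_card_filter_not
      (s := S1 ×ˢ S1) (p := fun p : Fin N × Fin N => p.1 = p.2)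
    rw [hdiagcard, Finset.card_product, hS1card] at hsplit
    rw [hPdef]
    omega
  -- the map
  set Φ : Fin N × Fin N → (Fin N → Fin N) :=
    fun p => Function.update f p.1 (f p.2) with hΦdef
  have hPmem : ∀ p ∈ P, p.1 ∈ S1 ∧ p.2 ∈ S1 ∧ p.1 ≠ p.2 := by
    intro p hp
    simp only [hPdef, Finset.mem_filter, Finset.mem_product] at hp
    exact ⟨hp.1.1, hp.1.2, hp.2⟩
  have hfneq : ∀ p ∈ P, f p.1 ≠ f p.2 := by
    intro p hp h
    obtain ⟨_, h2, h3⟩ := hPmem p hp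
    exact h3 (hS1fib p.2 h2 p.1 h)
  -- the differing-point set of Φ p is {p.1}
  have hdiff : ∀ p ∈ P, Finset.univ.filter (fun z => f z ≠ Φ p z) = {p.1} := by
    intro p hp
    ext z
    simp only [Finset.mem_filter, Finset.mem_univ, true_and, Finset.mem_singleton,
      hΦdef]
    constructor
    · intro h
      by_contra hz
      exact h (by rw [Function.update_of_ne hz])
    · rintro rfl
      rw [Function.update_self]
      exact hfneq p hp
  -- Φ p satisfies the fiber condition
  have hfib : ∀ p ∈ P, ∀ z : Fin N,
      (Finset.univ.filter (fun w => Φ p w = z)).card ≤ 2 := by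
    intro p hp z
    obtain ⟨h1, h2, h3⟩ := hPmem p hp
    by_cases hz : z = f p.2
    · have hsub : Finset.univ.filter (fun w => Φ p w = z) ⊆ {p.1, p.2} := by
        intro w hw
        simp only [Finset.mem_filter, Finset.mem_univ, true_and, hΦdef] at hw
        by_cases hwx : w = p.1
        · simp [hwx]
        · rw [Function.update_of_ne hwx] at hw
          have : w = p.2 := hS1fib p.2 h2 w (hw.trans hz)
          simp [this]
      calc (Finset.univ.filter (fun w => Φ p w = z)).card
          ≤ ({p.1, p.2} : Finset (Fin N)).card := Finset.card_le_card hsub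
        _ ≤ 2 := Finset.card_insert_le _ _ |>.trans (by simp)
    · have hsub : Finset.univ.filter (fun w => Φ p w = z) ⊆
          Finset.univ.filter (fun w => f w = z) := by
        intro w hw
        simp only [Finset.mem_filter, Finset.mem_univ, true_and, hΦdef] at hw ⊢
        by_cases hwx : w = p.1
        · exfalso; rw [hwx, Function.update_self] at hw; exact hz hw.symm
        · rwa [Function.update_of_ne hwx] at hw
      exact (Finset.card_le_card hsub).trans (hF z)
  -- x := p.1 (being in S1) belongs to no collision pair of f
  have hxC : ∀ p ∈ P, ∀ q ∈ C, q.1 ≠ p.1 ∧ q.2 ≠ p.1 := by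
    intro p hp q hq
    obtain ⟨h1, _, _⟩ := hPmem p hp
    simp only [hCdef, Finset.mem_filter, Finset.mem_univ, true_and] at hq
    constructor
    · intro h
      have : q.2 = p.1 := hS1fib p.1 h1 q.2 (by rw [← hq.2, h])
      rw [← this] at h
      exact absurd (h ▸ hq.1) (lt_irrefl _)
    · intro h
      have : q.1 = p.1 := hS1fib p.1 h1 q.1 (by rw [hq.2, h])
      rw [← this] at h
      exact absurd (h ▸ hq.1) (lt_irrefl _)
  -- collision count of Φ p
  have hcoll : ∀ p ∈ P,
      (Finset.univ.filter
        (fun q : Fin N × Fin N => q.1 < q.2 ∧ Φ p q.1 = Φ p q.2)).card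
        = N / 4 + 1 := by
    intro p hp
    obtain ⟨h1, h2, h3⟩ := hPmem p hp
    set x := p.1
    set y := p.2
    set q0 : Fin N × Fin N := if x < y then (x, y) else (y, x) with hq0def
    have hq0notC : q0 ∉ C := by
      intro h
      simp only [hCdef, Finset.mem_filter, Finset.mem_univ, true_and] at h
      rcases lt_or_gt_of_ne h3 with hlt | hlt
      · rw [hq0def, if_pos hlt] at h; exact hfneq p hp h.2
      · rw [hq0def, if_neg (not_lt_of_gt hlt)] at h; exact hfneq p hp h.2.symm
    have hset : Finset.univ.filter
        (fun q : Fin N × Fin N => q.1 < q.2 ∧ Φ p q.1 = Φ p q.2)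
        = insert q0 C := by
      ext r
      simp only [Finset.mem_filter, Finset.mem_univ, true_and, Finset.mem_insert,
        hΦdef]
      constructor
      · rintro ⟨hlt, hg⟩
        by_cases hux : r.1 = x
        · by_cases hvx : r.2 = x
          · exact absurd (hvx ▸ hux ▸ hlt) (lt_irrefl _)
          · rw [hux, Function.update_self, Function.update_of_ne hvx] at hg
            have hry : r.2 = y := hS1fib y h2 r.2 hg.symm
            left
            have hxy : x < y := by rw [← hux, ← hry]; exact hlt
            rw [hq0def, if_pos hxy, Prod.ext_iff]
            exact ⟨hux, hry⟩
        · by_cases hvx : r.2 = x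
          · rw [hvx, Function.update_self, Function.update_of_ne hux] at hg
            have hry : r.1 = y := hS1fib y h2 r.1 hg
            left
            have hyx : ¬ x < y := by
              rw [← hvx, ← hry]; exact not_lt_of_gt hlt
            rw [hq0def, if_neg hyx, Prod.ext_iff]
            exact ⟨hry, hvx⟩
          · rw [Function.update_of_ne hux, Function.update_of_ne hvx] at hg
            right
            simp only [hCdef, Finset.mem_filter, Finset.mem_univ, true_and]
            exact ⟨hlt, hg⟩
      · rintro (rfl | hr)
        · rcases lt_or_gt_of_ne h3 with hlt | hlt
          · rw [hq0def, if_pos hlt]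
            refine ⟨hlt, ?_⟩
            simp only
            rw [Function.update_self, Function.update_of_ne (ne_of_gt hlt)]
          · rw [hq0def, if_neg (not_lt_of_gt hlt)]
            refine ⟨hlt, ?_⟩
            simp only
            rw [Function.update_self, Function.update_of_ne (ne_of_gt hlt).symm]
        · obtain ⟨hne1, hne2⟩ := hxC p hp r hr
          simp only [hCdef, Finset.mem_filter, Finset.mem_univ, true_and] at hr
          refine ⟨hr.1, ?_⟩
          rw [Function.update_of_ne hne1, Function.update_of_ne hne2]
          exact hr.2
    rw [hset, Finset.card_insert_of_notMem hq0notC, hC]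
  -- Φ maps P into the target set
  set B := Finset.univ.filter (fun g : Fin N → Fin N =>
      (Finset.univ.filter
        (fun p : Fin N × Fin N => p.1 < p.2 ∧ g p.1 = g p.2)).card = N / 4 + 1 ∧
      (∀ z : Fin N, (Finset.univ.filter (fun x => g x = z)).card ≤ 2) ∧
      (Finset.univ.filter (fun x => f x ≠ g x)).card = 1) with hBdef
  have hmapsto : ∀ p ∈ P, Φ p ∈ B := by
    intro p hp
    simp only [hBdef, Finset.mem_filter, Finset.mem_univ, true_and]
    refine ⟨hcoll p hp, hfib p hp, ?_⟩
    rw [hdiff p hp]; simp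
  have hinj : Set.InjOn Φ P := by
    intro p hp p' hp' heq
    simp only [Finset.mem_coe] at hp hp'
    have hd1 := hdiff p hp
    have hd2 := hdiff p' hp'
    rw [heq] at hd1
    rw [hd1] at hd2
    have hx : p'.1 = p.1 := by
      have : p.1 ∈ ({p'.1} : Finset (Fin N)) := hd2 ▸ Finset.mem_singleton_self _
      exact (Finset.mem_singleton.mp this).symm
    have hy : p.2 = p'.2 := by
      obtain ⟨_, h2', _⟩ := hPmem p' hp'
      have hval : f p.2 = f p'.2 := by
        have e1 : Φ p p.1 = f p.2 := by
          simp only [hΦdef]; rw [Function.update_self]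
        have e2 : Φ p' p.1 = f p'.2 := by
          simp only [hΦdef]; rw [← hx, Function.update_self]
        rw [← e1, ← e2, heq]
      exact hS1fib p'.2 h2' p.2 hval
    obtain ⟨a1, a2⟩ := p
    obtain ⟨b1, b2⟩ := p'
    simp only at hx hy
    rw [hx, hy]
  have hle : P.card ≤ B.card :=
    Finset.card_le_card_of_injOn Φ hmapsto hinj
  have hNk : N = 4 * k := hk
  nlinarith [hPcard, hle, hk1, sq_nonneg k]


theorem stmt_8 :
    ∃ a b : ℝ, 0 < a ∧ a ≤ b ∧
      ∀ N : ℕ, 0 < N → 4 ∣ N →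
        ∀ f : Fin N → Fin N,
          (Finset.univ.filter
            (fun p : Fin N × Fin N => p.1 < p.2 ∧ f p.1 = f p.2)).card = N / 4 →
          (∀ z : Fin N, (Finset.univ.filter (fun x => f x = z)).card ≤ 2) →
          a * (N : ℝ) ^ 2 ≤
            ((Finset.univ.filter (fun g : Fin N → Fin N =>
              (Finset.univ.filter
                (fun p : Fin N × Fin N => p.1 < p.2 ∧ g p.1 = g p.2)).card = N / 4 + 1 ∧
              (∀ z : Fin N, (Finset.univ.filter (fun x => g x = z)).card ≤ 2) ∧
              (Finset.univ.filter (fun x => f x ≠ g x)).card = 1)).card : ℝ) ∧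
          ((Finset.univ.filter (fun g : Fin N → Fin N =>
              (Finset.univ.filter
                (fun p : Fin N × Fin N => p.1 < p.2 ∧ g p.1 = g p.2)).card = N / 4 + 1 ∧
              (∀ z : Fin N, (Finset.univ.filter (fun x => g x = z)).card ≤ 2) ∧
              (Finset.univ.filter (fun x => f x ≠ g x)).card = 1)).card : ℝ) ≤
            b * (N : ℝ) ^ 2 := by
  refine ⟨1/8, 1, by norm_num, by norm_num, ?_⟩
  intro N hN hdvd f hC hF
  set B := Finset.univ.filter (fun g : Fin N → Fin N =>
      (Finset.univ.filter
        (fun p : Fin N × Fin N => p.1 < p.2 ∧ g p.1 = g p.2)).card = N / 4 + 1 ∧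
      (∀ z : Fin N, (Finset.univ.filter (fun x => g x = z)).card ≤ 2) ∧
      (Finset.univ.filter (fun x => f x ≠ g x)).card = 1) with hBdef
  constructor
  · have h := aux_lower hN hdvd f hC hF
    have h' : (N : ℝ) ^ 2 ≤ 8 * (B.card : ℝ) := by
      exact_mod_cast h
    linarith
  · have hsub : B ⊆ Finset.univ.filter (fun g : Fin N → Fin N =>
        (Finset.univ.filter (fun x => f x ≠ g x)).card = 1) := by
      intro g hg
      simp only [hBdef, Finset.mem_filter, Finset.mem_univ, true_and] at hg ⊢
      exact hg.2.2
    have h := (Finset.card_le_card hsub).trans (aux_upper hN f)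
    have h' : (B.card : ℝ) ≤ (N : ℝ) ^ 2 := by exact_mod_cast h
    linarith
end

section
/- If f : [N] → Z has some value z ∈ Z attained at least k times (k ≥ 2), and S is a uniformly random subset of [N] of size min(N, ⌈10N/k⌉), then with probability at least 9/10, S contains at least two preimages of z. -/
/-!
Let `K ≥ k` be the number of preimages of `z`, `n = N - K` and `m` the sample size. Unless
`m = N`, when the only sample is `[N]` itself, the choice `m = ⌈10N/k⌉` gives `10N ≤ K m`.
Exactly `a_j = C(K, j) C(n, m - j)` samples meet `f⁻¹(z)` in `j` points, and by Vandermonde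
`a₂ + a₃ ≤ C(N, m)`. Via `C(n, r + 1) (r + 1) = C(n, r) (n - r)`, the bound `10N ≤ K m` gives
`10 a₀ ≤ a₁`, `10 a₁ ≤ 2 a₂` and `10 a₂ ≤ 3 a₃`, hence `10 (a₀ + a₁) ≤ a₂ + a₃`.
-/

open Finset

namespace Nat

theorem mul_choose_succ_le_mul_choose {n r c d : ℕ} (h : d * (n - r) ≤ c * (r + 1)) :
    d * n.choose (r + 1) ≤ c * n.choose r := by
  refine Nat.le_of_mul_le_mul_right ?_ r.succ_pos
  calc d * n.choose (r + 1) * (r + 1) = d * (n - r) * n.choose r := by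
        rw [mul_assoc, choose_succ_right_eq]; ring
    _ ≤ c * (r + 1) * n.choose r := Nat.mul_le_mul_right _ h
    _ = c * n.choose r * (r + 1) := by ring

theorem choose_two_mul_add_choose_three_mul_le_add_choose (K n r : ℕ) :
    K.choose 2 * n.choose (r + 1) + K.choose 3 * n.choose r ≤ (K + n).choose (r + 3) := by
  rw [add_choose_eq, Nat.sum_antidiagonal_eq_sum_range_succ_mk]
  calc K.choose 2 * n.choose (r + 1) + K.choose 3 * n.choose r
      = ∑ i ∈ {2, 3}, K.choose i * n.choose (r + 3 - i) := by simp
    _ ≤ ∑ i ∈ range (r + 3).succ, K.choose i * n.choose (r + 3 - i) :=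
        sum_le_sum_of_subset (by intro i; simp; omega)

theorem ten_mul_choose_add_mul_choose_pred_le {K n m : ℕ} (hK : 2 ≤ K)
    (h : 10 * (K + n) ≤ K * m) :
    10 * (n.choose m + K * n.choose (m - 1)) ≤ (K + n).choose m := by
  obtain ⟨L, rfl⟩ : ∃ L, K = L + 2 := ⟨K - 2, by omega⟩
  have hm : 10 ≤ m := Nat.le_of_mul_le_mul_left (c := L + 2) (by linarith) (by omega)
  obtain ⟨r, rfl⟩ : ∃ r, m = r + 3 := ⟨m - 3, by omega⟩
  simp only [show r + 3 - 1 = r + 2 by omega]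
  have h1 : 10 * n.choose (r + 3) ≤ (L + 2) * n.choose (r + 2) :=
    mul_choose_succ_le_mul_choose (by rw [Nat.mul_sub, Nat.sub_le_iff_le_add]; nlinarith)
  have h2 : 10 * n.choose (r + 2) ≤ (L + 1) * n.choose (r + 1) :=
    mul_choose_succ_le_mul_choose (by rw [Nat.mul_sub, Nat.sub_le_iff_le_add]; nlinarith)
  have h3 : 10 * n.choose (r + 1) ≤ L * n.choose r :=
    mul_choose_succ_le_mul_choose (by rw [Nat.mul_sub, Nat.sub_le_iff_le_add]; nlinarith)
  have hK2 : (L + 2).choose 2 * 2 = (L + 2) * (L + 1) := by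
    simpa using choose_succ_right_eq (L + 2) 1
  have hK3 : (L + 2).choose 3 * 3 = (L + 2).choose 2 * L := by
    simpa using choose_succ_right_eq (L + 2) 2
  have g2 : 10 * ((L + 2) * n.choose (r + 2)) ≤ 2 * ((L + 2).choose 2 * n.choose (r + 1)) := by
    nlinarith
  have g3 : 10 * ((L + 2).choose 2 * n.choose (r + 1)) ≤ 3 * ((L + 2).choose 3 * n.choose r) := by
    nlinarith
  have := choose_two_mul_add_choose_three_mul_le_add_choose (L + 2) n r
  omega

end Nat

section

variable {α : Type*} (s : Finset α) (p : α → Prop) [DecidablePred p]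

theorem card_powersetCard_filter_card_filter_eq_le (m j : ℕ) :
    #{t ∈ s.powersetCard m | #{x ∈ t | p x} = j} ≤
      (#{x ∈ s | p x}).choose j * (#{x ∈ s | ¬p x}).choose (m - j) := by
  classical
  calc #{t ∈ s.powersetCard m | #{x ∈ t | p x} = j}
      ≤ #({x ∈ s | p x}.powersetCard j ×ˢ {x ∈ s | ¬p x}.powersetCard (m - j)) := by
        refine card_le_card_of_injOn (fun t => ({x ∈ t | p x}, {x ∈ t | ¬p x})) ?_ ?_
        · intro t ht
          rw [mem_coe, mem_filter, mem_powersetCard] at ht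
          obtain ⟨⟨hts, htm⟩, htj⟩ := ht
          have := card_filter_add_card_filter_not (s := t) (p := fun x => p x)
          rw [mem_coe, mem_product, mem_powersetCard, mem_powersetCard]
          dsimp only
          exact ⟨⟨filter_subset_filter p hts, htj⟩, filter_subset_filter _ hts, by omega⟩
        · intro t₁ _ t₂ _ h
          simp only [Prod.mk.injEq] at h
          rw [← filter_union_filter_not_eq p t₁, ← filter_union_filter_not_eq p t₂, h.1, h.2]
    _ = _ := by rw [card_product, card_powersetCard, card_powersetCard]

theorem card_powersetCard_filter_card_filter_lt_two_le (m : ℕ) :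
    #{t ∈ s.powersetCard m | #{x ∈ t | p x} < 2} ≤
      (#{x ∈ s | ¬p x}).choose m + #{x ∈ s | p x} * (#{x ∈ s | ¬p x}).choose (m - 1) := by
  classical
  have hsplit : {t ∈ s.powersetCard m | #{x ∈ t | p x} < 2} =
      {t ∈ s.powersetCard m | #{x ∈ t | p x} = 0} ∪ {t ∈ s.powersetCard m | #{x ∈ t | p x} = 1} := by
    rw [← filter_or]
    refine filter_congr fun t _ => ?_
    omega
  rw [hsplit]
  refine (card_union_le _ _).trans (add_le_add ?_ ?_)
  · simpa using card_powersetCard_filter_card_filter_eq_le s p m 0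
  · simpa using card_powersetCard_filter_card_filter_eq_le s p m 1

theorem ten_mul_card_powersetCard_filter_card_filter_lt_two_le {m : ℕ}
    (hK : 2 ≤ #{x ∈ s | p x}) (h : 10 * #s ≤ #{x ∈ s | p x} * m) :
    10 * #{t ∈ s.powersetCard m | #{x ∈ t | p x} < 2} ≤ #(s.powersetCard m) := by
  have hs := card_filter_add_card_filter_not (s := s) (p := fun x => p x)
  rw [card_powersetCard, ← hs]
  exact (Nat.mul_le_mul_left 10 (card_powersetCard_filter_card_filter_lt_two_le s p m)).trans
    (Nat.ten_mul_choose_add_mul_choose_pred_le hK (hs ▸ h))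

end

theorem Finset.one_sub_le_card_filter_div_card {β 𝕜 : Type*} [Field 𝕜] [LinearOrder 𝕜]
    [IsStrictOrderedRing 𝕜] {T : Finset β} (q : β → Prop) [DecidablePred q] (hT : T.Nonempty)
    {ε : 𝕜} (h : (#{t ∈ T | ¬q t} : 𝕜) ≤ ε * #T) :
    1 - ε ≤ (#{t ∈ T | q t} : 𝕜) / #T := by
  have hsplit : (#{t ∈ T | q t} : 𝕜) + #{t ∈ T | ¬q t} = #T := by
    exact_mod_cast card_filter_add_card_filter_not (s := T) (p := fun t => q t)
  rw [le_div_iff₀ (by exact_mod_cast hT.card_pos)]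
  linarith

theorem stmt_16 {Z : Type*} [DecidableEq Z] (N k : ℕ) (hk : 2 ≤ k)
    (f : ℕ → Z) (z : Z)
    (hpre : k ≤ ((Finset.Icc 1 N).filter (fun x => f x = z)).card) :
    (9 / 10 : ℚ) ≤
      ((((Finset.Icc 1 N).powersetCard (min N ((10 * N + k - 1) / k))).filter
          (fun S => 2 ≤ (S.filter (fun x => f x = z)).card)).card : ℚ) /
        (((Finset.Icc 1 N).powersetCard (min N ((10 * N + k - 1) / k))).card : ℚ) := by
  set s := Icc 1 N
  set c := (10 * N + k - 1) / k
  have hs : #s = N := by simp [s]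
  have hK : 2 ≤ #{x ∈ s | f x = z} := hk.trans hpre
  have hbad : 10 * #{t ∈ s.powersetCard (min N c) | #{x ∈ t | f x = z} < 2} ≤
      #(s.powersetCard (min N c)) := by
    rcases le_total N c with hNc | hcN
    · rw [min_eq_left hNc, ← hs, powersetCard_self, filter_singleton, if_neg (by omega)]
      simp
    · rw [min_eq_right hcN]
      refine ten_mul_card_powersetCard_filter_card_filter_lt_two_le s _ hK ?_
      have hceil : 10 * N + k - 1 < c * k + k := Nat.lt_div_mul_add (by omega)
      have hkc : 10 * N ≤ c * k := by omega
      rw [hs]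
      nlinarith
  have hnonempty : (s.powersetCard (min N c)).Nonempty :=
    powersetCard_nonempty.mpr (hs ▸ min_le_left N c)
  refine le_of_eq_of_le (by norm_num) (one_sub_le_card_filter_div_card _ hnonempty (ε := 1 / 10) ?_)
  have hbad_cast : (10 * #{t ∈ s.powersetCard (min N c) | #{x ∈ t | f x = z} < 2} : ℚ) ≤
      #(s.powersetCard (min N c)) := by exact_mod_cast hbad
  simp only [not_le]
  linarith
end
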